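/- arXiv:1701.06679 — 5 statements merged into one kernel-verified Lean document; each statement's English description precedes it below -/
import Mathlib

section
/- The GMI function π_GMI^f is valid for the pure-integer one-row corner relaxation: if y : ℚ → ℝ≥0 has finite support, every q in the support of y satisfies y(q) ∈ ℤ and y(q) ≥ 0, and f + Σ_q q·y(q) ∈ ℤ, with f ∉ ℤ, then Σ_q π_GMI^f(q)·y(q) ≥ 1. -/
noncomputable def piGMI (f q : ℝ) : ℝ :=
  max (Int.fract q / (1 - Int.fract f)) ((1 - Int.fract q) / Int.fract f)

theorem piGMI_valid_pure_integer (f : ℝ) (hf : f ∉ Set.range ((↑) : ℤ → ℝ))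
    (y : ℝ →₀ ℝ)
    (hy_nonneg : ∀ q, 0 ≤ y q)
    (hy_int : ∀ q ∈ y.support, y q ∈ Set.range ((↑) : ℤ → ℝ))
    (hfeas : f + ∑ q ∈ y.support, q * y q ∈ Set.range ((↑) : ℤ → ℝ)) :
    1 ≤ ∑ q ∈ y.support, piGMI f q * y q := by
  set r := Int.fract f with hrdef
  have hrne : r ≠ 0 := by
    intro h
    rw [hrdef, Int.fract] at h
    exact hf ⟨⌊f⌋, by linarith⟩
  have hr0 : 0 < r := lt_of_le_of_ne (Int.fract_nonneg f) (Ne.symm hrne)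
  have hr1 : r < 1 := Int.fract_lt_one f
  -- choose integer values of y
  have hchoice : ∀ q ∈ y.support, ∃ m : ℤ, (m : ℝ) = y q := fun q hq =>
    (hy_int q hq).imp fun m hm => hm
  choose! m hm using hchoice
  set T := ∑ q ∈ y.support, Int.fract q * y q with hTdef
  obtain ⟨N, hN⟩ := hfeas
  set K : ℤ := ∑ q ∈ y.support, ⌊q⌋ * m q with hKdef
  have hK : (K : ℝ) = ∑ q ∈ y.support, (⌊q⌋ : ℝ) * y q := by
    rw [hKdef]
    push_cast
    exact Finset.sum_congr rfl fun q hq => by rw [hm q hq]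
  have hT : T = ((N - K : ℤ) : ℝ) + (-f) := by
    have : T = (∑ q ∈ y.support, q * y q) - (K : ℝ) := by
      rw [hTdef, hK, ← Finset.sum_sub_distrib]
      exact Finset.sum_congr rfl fun q hq => by rw [Int.fract]; ring
    have hs : ∑ q ∈ y.support, q * y q = (N : ℝ) - f := by linarith [hN]
    rw [this, hs]
    push_cast
    ring
  have hfracT : Int.fract T = 1 - r := by
    rw [hT, Int.fract_intCast_add, Int.fract_neg hrne]
  have hT0 : 0 ≤ T :=
    Finset.sum_nonneg fun q _ => mul_nonneg (Int.fract_nonneg q) (hy_nonneg q)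
  have hTge : 1 - r ≤ T := by
    have hfloor : (0 : ℝ) ≤ (⌊T⌋ : ℝ) := by
      exact_mod_cast Int.floor_nonneg.mpr hT0
    have := Int.floor_add_fract T
    rw [hfracT] at this
    linarith
  have hsum : ∑ q ∈ y.support, Int.fract q / (1 - r) * y q ≤
      ∑ q ∈ y.support, piGMI f q * y q := by
    refine Finset.sum_le_sum fun q _ => ?_
    exact mul_le_mul_of_nonneg_right (le_max_left _ _) (hy_nonneg q)
  have heq : ∑ q ∈ y.support, Int.fract q / (1 - r) * y q = T / (1 - r) := by
    rw [hTdef, Finset.sum_div]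
    exact Finset.sum_congr rfl fun q _ => by ring
  have h1r : 0 < 1 - r := by linarith
  have : (1 : ℝ) ≤ T / (1 - r) := (one_le_div h1r).mpr hTge
  linarith [hsum, heq.symm ▸ this]
end

section
/- Let u ∈ ℤⁿ, f ∈ ℝⁿ, and A : ℝᵐ → ℝⁿ linear. For every f' with A f' = f, the preimage of the centered split set satisfies A⁻¹(S̄(u,f)) = S̄(Aᵀ u, f'), where S̄(u,f) = {x : ⌊u·f⌋ ≤ u·(x+f) ≤ ⌈u·f⌉} and Aᵀ is the adjoint of A. -/
theorem preimage_centered_split (n m : ℕ) (u : Fin n → ℤ) (f : Fin n → ℝ)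
    (A : (Fin m → ℝ) →ₗ[ℝ] (Fin n → ℝ))
    (At : (Fin n → ℝ) →ₗ[ℝ] (Fin m → ℝ))
    (hadj : ∀ (x : Fin n → ℝ) (y : Fin m → ℝ), ∑ i, x i * (A y) i = ∑ j, (At x) j * y j)
    (f' : Fin m → ℝ) (hf' : A f' = f) :
    A ⁻¹' {x : Fin n → ℝ |
        (⌊∑ i, (u i : ℝ) * f i⌋ : ℝ) ≤ ∑ i, (u i : ℝ) * (x i + f i) ∧
        ∑ i, (u i : ℝ) * (x i + f i) ≤ (⌈∑ i, (u i : ℝ) * f i⌉ : ℝ)} =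
      {x : Fin m → ℝ |
        (⌊∑ i, (u i : ℝ) * f i⌋ : ℝ) ≤ ∑ j, (At (fun i => (u i : ℝ))) j * (x j + f' j) ∧
        ∑ j, (At (fun i => (u i : ℝ))) j * (x j + f' j) ≤ (⌈∑ i, (u i : ℝ) * f i⌉ : ℝ)} := by
  ext x
  have key : ∑ i, (u i : ℝ) * ((A x) i + f i)
      = ∑ j, (At (fun i => (u i : ℝ))) j * (x j + f' j) := by
    have h := hadj (fun i => (u i : ℝ)) (x + f')
    have hA : A (x + f') = fun i => (A x) i + f i := by
      rw [map_add, hf']; rfl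
    simpa [hA] using h
  simp only [Set.mem_preimage, Set.mem_setOf_eq, key]
end

section
/- Let f ∈ ℝⁿ and α ∈ ℤⁿ with α·f ∉ ℤ. Then for all q ∈ ℝⁿ and w ∈ ℝ, γ_{S̄((1,1),(α·f,0))}((α·q, w)) = γ_{S̄((α,1),(f,0))}((q,w)), where S̄((α,1),(f,0)) ⊆ ℝ^{n+1} is the centered split set with normal (α,1) ∈ ℤ^{n+1} at (f,0). -/
theorem gauge_alpha_invariance (n : ℕ) (α : Fin n → ℤ) (f : Fin n → ℝ)
    (hd : (∑ i, (α i : ℝ) * f i) ∉ Set.range ((↑) : ℤ → ℝ))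
    (q : Fin n → ℝ) (w : ℝ) :
    gauge {p : ℝ × ℝ |
        (⌊∑ i, (α i : ℝ) * f i⌋ : ℝ) ≤ (p.1 + ∑ i, (α i : ℝ) * f i) + (p.2 + 0) ∧
        (p.1 + ∑ i, (α i : ℝ) * f i) + (p.2 + 0) ≤ (⌈∑ i, (α i : ℝ) * f i⌉ : ℝ)}
      (∑ i, (α i : ℝ) * q i, w) =
    gauge {p : (Fin n → ℝ) × ℝ |
        (⌊∑ i, (α i : ℝ) * f i⌋ : ℝ) ≤ (∑ i, (α i : ℝ) * (p.1 i + f i)) + (p.2 + 0) ∧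
        (∑ i, (α i : ℝ) * (p.1 i + f i)) + (p.2 + 0) ≤ (⌈∑ i, (α i : ℝ) * f i⌉ : ℝ)}
      (q, w) := by
  unfold gauge
  congr 1
  ext r
  simp only [Set.mem_setOf_eq]
  refine and_congr_right fun hr => ?_
  rw [Set.mem_smul_set_iff_inv_smul_mem₀ hr.ne', Set.mem_smul_set_iff_inv_smul_mem₀ hr.ne']
  simp only [Prod.smul_mk, smul_eq_mul, Set.mem_setOf_eq, Pi.smul_apply]
  have key : ∑ i, (α i : ℝ) * (r⁻¹ * q i + f i)
      = r⁻¹ * ∑ i, (α i : ℝ) * q i + ∑ i, (α i : ℝ) * f i := by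
    rw [Finset.mul_sum, ← Finset.sum_add_distrib]
    congr 1; ext i; ring
  rw [key]
end

section
/- Let S = S(α,f) ⊆ ℝⁿ be a split set with α ∈ ℤⁿ and α·f ∉ ℤ, and let X ⊆ ℤⁿ be nonempty. Then for every r ∈ ℝⁿ the infimum inf{ γ_{S−f}(r+w) : w ∈ X } is attained by some w* ∈ X. -/
open Set Pointwise

lemma gauge_slab (n : ℕ) (α : Fin n → ℤ) (a b : ℝ) (ha : a < 0) (hb : 0 < b)
    (p : Fin n → ℝ) :
    gauge {x : Fin n → ℝ | a ≤ ∑ i, (α i : ℝ) * x i ∧ ∑ i, (α i : ℝ) * x i ≤ b} p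
      = max ((∑ i, (α i : ℝ) * p i) / b) ((∑ i, (α i : ℝ) * p i) / a) := by
  set L : ℝ := ∑ i, (α i : ℝ) * p i with hL
  have key : {r : ℝ | 0 < r ∧ p ∈ r • {x : Fin n → ℝ | a ≤ ∑ i, (α i : ℝ) * x i ∧ ∑ i, (α i : ℝ) * x i ≤ b}}
      = {r : ℝ | 0 < r ∧ max (L / b) (L / a) ≤ r} := by
    ext t
    simp only [Set.mem_setOf_eq]
    constructor
    · rintro ⟨ht, hmem⟩
      refine ⟨ht, ?_⟩
      rw [Set.mem_smul_set_iff_inv_smul_mem₀ (ne_of_gt ht)] at hmem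
      obtain ⟨h1, h2⟩ := hmem
      have hsum : ∑ i, (α i : ℝ) * (t⁻¹ • p) i = t⁻¹ * L := by
        rw [hL, Finset.mul_sum]; apply Finset.sum_congr rfl; intro i _
        simp [Pi.smul_apply, smul_eq_mul]; ring
      rw [hsum] at h1 h2
      rw [max_le_iff]
      constructor
      · rw [div_le_iff₀ hb]
        calc L = t * (t⁻¹ * L) := by field_simp
          _ ≤ t * b := by nlinarith
      · rw [div_le_iff_of_neg ha]
        calc t * a ≤ t * (t⁻¹ * L) := by nlinarith
          _ = L := by field_simp
    · rintro ⟨ht, hmax⟩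
      refine ⟨ht, ?_⟩
      rw [Set.mem_smul_set_iff_inv_smul_mem₀ (ne_of_gt ht)]
      have hsum : ∑ i, (α i : ℝ) * (t⁻¹ • p) i = t⁻¹ * L := by
        rw [hL, Finset.mul_sum]; apply Finset.sum_congr rfl; intro i _
        simp [Pi.smul_apply, smul_eq_mul]; ring
      rw [max_le_iff] at hmax
      obtain ⟨h1, h2⟩ := hmax
      rw [div_le_iff₀ hb] at h1
      rw [div_le_iff_of_neg ha] at h2
      constructor
      · rw [hsum, le_inv_mul_iff₀ ht]
        linarith [h2]
      · rw [hsum, inv_mul_le_iff₀ ht]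
        linarith [h1]
  rw [gauge, key]
  rcases le_or_gt (max (L / b) (L / a)) 0 with h | h
  · have hge : (0:ℝ) ≤ max (L / b) (L / a) := by
      rcases le_or_gt 0 L with hl | hl
      · exact le_max_of_le_left (div_nonneg hl hb.le)
      · exact le_max_of_le_right (div_nonneg_of_nonpos hl.le ha.le)
    have h0 : max (L / b) (L / a) = 0 := le_antisymm h hge
    rw [h0]
    have : {r : ℝ | 0 < r ∧ (0:ℝ) ≤ r} = Set.Ioi 0 := by ext; simp [lt_iff_lt_of_le_iff_le]; intro h; exact h.le
    rw [this]
    exact csInf_Ioi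
  · have : {r : ℝ | 0 < r ∧ max (L / b) (L / a) ≤ r} = Set.Ici (max (L / b) (L / a)) := by
      ext t; simp only [Set.mem_setOf_eq, Set.mem_Ici]
      exact ⟨fun ⟨_, h2⟩ => h2, fun h2 => ⟨lt_of_lt_of_le h h2, h2⟩⟩
    rw [this, csInf_Ici]

theorem lifting_min_attained (n : ℕ) (α : Fin n → ℤ) (f : Fin n → ℝ)
    (hd : (∑ i, (α i : ℝ) * f i) ∉ Set.range ((↑) : ℤ → ℝ))
    (X : Set (Fin n → ℤ)) (hX : X.Nonempty) (r : Fin n → ℝ) :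
    ∃ w ∈ X,
      ∀ w' ∈ X,
        gauge {x : Fin n → ℝ |
            (⌊∑ i, (α i : ℝ) * f i⌋ : ℝ) ≤ ∑ i, (α i : ℝ) * (x i + f i) ∧
            ∑ i, (α i : ℝ) * (x i + f i) ≤ (⌈∑ i, (α i : ℝ) * f i⌉ : ℝ)}
          (r + fun i => (w i : ℝ)) ≤
        gauge {x : Fin n → ℝ |
            (⌊∑ i, (α i : ℝ) * f i⌋ : ℝ) ≤ ∑ i, (α i : ℝ) * (x i + f i) ∧
            ∑ i, (α i : ℝ) * (x i + f i) ≤ (⌈∑ i, (α i : ℝ) * f i⌉ : ℝ)}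
          (r + fun i => (w' i : ℝ)) := by
  set F : ℝ := ∑ i, (α i : ℝ) * f i with hF
  have hFnotint : ∀ k : ℤ, (k : ℝ) ≠ F := by
    intro k hk; exact hd ⟨k, hk⟩
  set a : ℝ := (⌊F⌋ : ℝ) - F with ha'
  set b : ℝ := (⌈F⌉ : ℝ) - F with hb'
  have ha : a < 0 := by
    have := Int.floor_le F
    have hne := hFnotint ⌊F⌋
    rw [ha']; cases' lt_or_eq_of_le this with h h
    · linarith
    · exact absurd h hne
  have hb : 0 < b := by
    have := Int.le_ceil F
    have hne := hFnotint ⌈F⌉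
    rw [hb']; cases' lt_or_eq_of_le this with h h
    · linarith
    · exact absurd h.symm hne
  -- rewrite the set
  have hset : {x : Fin n → ℝ |
      (⌊F⌋ : ℝ) ≤ ∑ i, (α i : ℝ) * (x i + f i) ∧
      ∑ i, (α i : ℝ) * (x i + f i) ≤ (⌈F⌉ : ℝ)}
      = {x : Fin n → ℝ | a ≤ ∑ i, (α i : ℝ) * x i ∧ ∑ i, (α i : ℝ) * x i ≤ b} := by
    ext x
    have hsum : ∑ i, (α i : ℝ) * (x i + f i) = (∑ i, (α i : ℝ) * x i) + F := by
      rw [hF, ← Finset.sum_add_distrib]; apply Finset.sum_congr rfl; intro i _; ring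
    simp only [Set.mem_setOf_eq, hsum, ha', hb']
    constructor <;> (rintro ⟨h1, h2⟩; constructor <;> linarith)
  rw [hset]
  -- gauge value function
  set c : ℝ := ∑ i, (α i : ℝ) * r i with hc
  have hval : ∀ w : Fin n → ℤ,
      gauge {x : Fin n → ℝ | a ≤ ∑ i, (α i : ℝ) * x i ∧ ∑ i, (α i : ℝ) * x i ≤ b}
        (r + fun i => (w i : ℝ))
      = max ((c + ((∑ i, α i * w i : ℤ) : ℝ)) / b) ((c + ((∑ i, α i * w i : ℤ) : ℝ)) / a) := by
    intro w
    rw [gauge_slab n α a b ha hb]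
    congr 2 <;>
    · push_cast
      rw [hc, ← Finset.sum_add_distrib]
      apply Finset.sum_congr rfl; intro i _; simp [Pi.add_apply]; ring
  set h : ℤ → ℝ := fun k => max ((c + (k : ℝ)) / b) ((c + (k : ℝ)) / a) with hh
  set m : (Fin n → ℤ) → ℤ := fun w => ∑ i, α i * w i with hm
  -- minimize h over K = m '' X
  obtain ⟨w₀, hw₀⟩ := hX
  set B : ℝ := h (m w₀) with hB
  have hfin : Set.Finite {k : ℤ | k ∈ m '' X ∧ h k ≤ B} := by
    apply Set.Finite.subset (Set.finite_Icc ⌈B * a - c⌉ ⌊B * b - c⌋)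
    rintro k ⟨_, hk⟩
    rw [hh] at hk
    simp only [max_le_iff] at hk
    obtain ⟨h1, h2⟩ := hk
    rw [div_le_iff₀ hb] at h1
    rw [div_le_iff_of_neg ha] at h2
    constructor
    · exact Int.ceil_le.2 (by linarith)
    · exact Int.le_floor.2 (by linarith)
  have hne : Set.Nonempty {k : ℤ | k ∈ m '' X ∧ h k ≤ B} :=
    ⟨m w₀, ⟨w₀, hw₀, rfl⟩, le_refl B⟩
  obtain ⟨k₀, ⟨⟨w, hwX, hwk⟩, hkB⟩, hmin⟩ :=
    Set.exists_min_image _ h hfin hne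
  refine ⟨w, hwX, fun w' hw' => ?_⟩
  rw [hval w, hval w']
  have hw : h (m w) = h k₀ := by rw [hwk]
  show h (m w) ≤ h (m w')
  rw [hw]
  rcases le_or_gt (h (m w')) B with hle | hgt
  · exact hmin (m w') ⟨⟨w', hw', rfl⟩, hle⟩
  · exact le_trans hkB hgt.le
end

section
/- Let ε > 0 be rational and set q¹ = 1/2 + ε/2, q² = 1/2 + ε. For every odd integer α, at least one of [α q¹] and [α q²] lies in the closed interval [1/6, 5/6], where [a] = a − ⌊a⌋. -/
theorem fract_one_in_middle (ε : ℚ) (hε : 0 < ε) (α : ℤ) (hα : Odd α) :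
    Int.fract ((α : ℝ) * (1 / 2 + (ε : ℝ) / 2)) ∈ Set.Icc (1 / 6 : ℝ) (5 / 6) ∨
    Int.fract ((α : ℝ) * (1 / 2 + (ε : ℝ))) ∈ Set.Icc (1 / 6 : ℝ) (5 / 6) := by
  obtain ⟨k, hk⟩ := hα
  have hα' : (α : ℝ) = 2 * (k : ℝ) + 1 := by exact_mod_cast hk
  set x : ℝ := (α : ℝ) * ε / 2 with hx
  set t : ℝ := Int.fract x with htdef
  have ht0 : 0 ≤ t := Int.fract_nonneg x
  have ht1 : t < 1 := Int.fract_lt_one x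
  have hfl : (⌊x⌋ : ℝ) + t = x := Int.floor_add_fract x
  have e1 : (α : ℝ) * (1 / 2 + (ε : ℝ) / 2) = ((k + ⌊x⌋ : ℤ) : ℝ) + (1 / 2 + t) := by
    push_cast
    nlinarith [hfl, hα']
  have e2 : (α : ℝ) * (1 / 2 + (ε : ℝ)) = ((k + 2 * ⌊x⌋ : ℤ) : ℝ) + (1 / 2 + 2 * t) := by
    push_cast
    nlinarith [hfl, hα']
  rw [e1, e2, Int.fract_intCast_add, Int.fract_intCast_add]
  rcases le_or_gt t (1 / 3) with h1 | h1
  · left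
    rw [Int.fract_eq_self.mpr ⟨by linarith, by linarith⟩]
    constructor <;> linarith
  · rcases le_or_gt (2 / 3) t with h2 | h2
    · left
      rw [show (1 / 2 + t : ℝ) = ((1 : ℤ) : ℝ) + (t - 1 / 2) by push_cast; ring,
        Int.fract_intCast_add, Int.fract_eq_self.mpr ⟨by linarith, by linarith⟩]
      constructor <;> linarith
    · right
      rw [show (1 / 2 + 2 * t : ℝ) = ((1 : ℤ) : ℝ) + (2 * t - 1 / 2) by push_cast; ring,
        Int.fract_intCast_add, Int.fract_eq_self.mpr ⟨by linarith, by linarith⟩]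
      constructor <;> linarith
end
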